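/- Let e(n) denote the number of words of length n over {0,1,2,3} all of whose palindromic factors lie in {ε, 0, 1, 2, 3} (no palindromic factor of length ≥ 2). Then e(n) = 3·2^n for all n ≥ 2. -/

import Mathlib

def IsFactor {α : Type*} (y x : List α) : Prop := ∃ u v, x = u ++ y ++ v

def IsPal {α : Type*} (y : List α) : Prop := y.reverse = y

/-!
A palindrome of length at least two has the form `a m a`. Hence a word `a :: t` is
palindrome-free iff `t` is and `a` differs from the first two letters of `t`: otherwise a
palindromic prefix `a m a` would either put `a` among those two letters or make `m` a
palindromic factor of `t` of length at least two. Adding letters at the front, a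
palindrome-free word of length at least two has two distinct leading letters, so it
extends in exactly `k - 2` ways over a `k`-letter alphabet. There are therefore
`k (k - 1) (k - 2)^(n - 2)` such words of length `n ≥ 2`, which is `3 · 2^n` for `k = 4`.
-/

theorem isFactor_iff_isInfix {α : Type*} {y x : List α} : IsFactor y x ↔ y <:+: x := by
  simp only [IsFactor, List.IsInfix, eq_comm]

namespace List

variable {α : Type*}

def IsPalFree (w : List α) : Prop :=
  ∀ u, u <:+: w → u.Palindrome → u.length ≤ 1

theorem isPalFree_nil : IsPalFree ([] : List α) :=
  fun _ hu _ => by simp [eq_nil_of_infix_nil hu]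

theorem isPalFree_cons_iff {a : α} {t : List α} :
    IsPalFree (a :: t) ↔ a ∉ t.take 2 ∧ IsPalFree t := by
  constructor
  · intro h
    refine ⟨fun ha => ?_, fun u hu => h u (infix_cons hu)⟩
    rcases t with _ | ⟨b, _ | ⟨c, t⟩⟩
    · simp at ha
    · obtain rfl : a = b := by simpa using ha
      simpa using h [a, a] (prefix_append _ _).isInfix (.of_reverse_eq rfl)
    · obtain rfl | rfl : a = b ∨ a = c := by simpa using ha
      · simpa using h [a, a] (prefix_append _ _).isInfix (.of_reverse_eq rfl)
      · simpa using h [a, b, a] (prefix_append _ _).isInfix (.of_reverse_eq rfl)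
  · rintro ⟨ha, ht⟩ u hu hpal
    rcases infix_cons_iff.mp hu with ⟨s, hs⟩ | hu
    · by_contra hlen
      cases hpal with
      | nil => simp at hlen
      | singleton => simp at hlen
      | cons_concat x hm =>
        rename_i m
        simp only [cons_append, append_assoc, cons.injEq] at hs
        obtain ⟨rfl, rfl⟩ := hs
        rcases m with _ | ⟨b, _ | ⟨c, m⟩⟩
        · simp at ha
        · simp at ha
        · simpa using ht _ (prefix_append _ _).isInfix hm
    · exact ht u hu hpal

theorem IsPalFree.nodup_take_two {w : List α} (hw : IsPalFree w) : (w.take 2).Nodup := by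
  rcases w with _ | ⟨b, _ | ⟨c, t⟩⟩
  · simp
  · simp
  · have := (isPalFree_cons_iff.mp hw).1
    simp_all

variable [DecidableEq α] [Fintype α]

variable (α) in
def palFreeWords : ℕ → Finset (List α)
  | 0 => {[]}
  | n + 1 => ((palFreeWords n).sigma fun t => Finset.univ.filter (· ∉ t.take 2)).image
      fun p => p.2 :: p.1

theorem mem_palFreeWords {n : ℕ} {w : List α} :
    w ∈ palFreeWords α n ↔ w.length = n ∧ IsPalFree w := by
  induction n generalizing w with
  | zero => cases w <;> simp [palFreeWords, isPalFree_nil]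
  | succ n ih =>
    cases w with
    | nil => simp [palFreeWords]
    | cons a t =>
      simp only [palFreeWords, Finset.mem_image, Finset.mem_sigma, ih, Finset.mem_filter,
        Finset.mem_univ, true_and, cons.injEq, Sigma.exists, existsAndEq, exists_eq_right,
        length_cons, Nat.add_right_cancel_iff, isPalFree_cons_iff]
      tauto

theorem card_filter_notMem_take_two {t : List α} (ht : IsPalFree t) :
    (Finset.univ.filter (· ∉ t.take 2)).card = Fintype.card α - min t.length 2 := by
  have : Finset.univ.filter (· ∉ t.take 2) = Finset.univ \ (t.take 2).toFinset := by ext; simp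
  rw [this, Finset.card_univ_sdiff, toFinset_card_of_nodup ht.nodup_take_two, length_take, min_comm]

theorem card_palFreeWords_succ (n : ℕ) :
    (palFreeWords α (n + 1)).card = (Fintype.card α - min n 2) * (palFreeWords α n).card := by
  rw [palFreeWords, Finset.card_image_of_injective _ (fun p q h => ?_), Finset.card_sigma,
    Finset.sum_congr rfl fun t ht => ?_, Finset.sum_const, smul_eq_mul, mul_comm]
  · obtain ⟨hlen, hfree⟩ := mem_palFreeWords.mp ht
    rw [card_filter_notMem_take_two hfree, hlen]
  · simp only [cons.injEq] at h
    exact Sigma.ext h.2 (heq_of_eq h.1)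

theorem card_palFreeWords {n : ℕ} (hn : 2 ≤ n) :
    (palFreeWords α n).card =
      Fintype.card α * (Fintype.card α - 1) * (Fintype.card α - 2) ^ (n - 2) := by
  induction n, hn using Nat.le_induction with
  | base =>
    rw [card_palFreeWords_succ 1, card_palFreeWords_succ 0]
    simp [palFreeWords, mul_comm]
  | succ n hn ih =>
    rw [card_palFreeWords_succ, ih, min_eq_right hn, Nat.sub_add_comm hn, pow_succ]
    ring

end List

open List in
/-- The number of words of length `n` over a 4-letter alphabet all of whose palindromic
factors lie in `{ε, 0, 1, 2, 3}` (i.e., have length ≤ 1) equals `3·2^n` for `n ≥ 2`. -/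
theorem count_quaternary_no_palindrome (n : ℕ) (hn : 2 ≤ n) :
    {w : List (Fin 4) | w.length = n ∧
      ∀ u, IsFactor u w → IsPal u → u.length ≤ 1}.ncard = 3 * 2 ^ n := by
  have hset : {w : List (Fin 4) | w.length = n ∧
      ∀ u, IsFactor u w → IsPal u → u.length ≤ 1} = palFreeWords (Fin 4) n := by
    ext w
    simp only [Set.mem_ofPred_eq, Finset.mem_coe, mem_palFreeWords, IsPalFree,
      isFactor_iff_isInfix, IsPal, ← Palindrome.iff_reverse_eq]
  obtain ⟨m, rfl⟩ := Nat.exists_eq_add_of_le' hn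
  rw [hset, Set.ncard_coe_finset, card_palFreeWords hn]
  simp only [Fintype.card_fin, Nat.add_sub_cancel, pow_add]
  ring
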